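/- arXiv:2310.13880 — 8 statements merged into one kernel-verified Lean document; each statement's English description precedes it below -/
import Mathlib

section
/- Let K be a field of characteristic 0 with a fixed algebraic closure K̄, and let f ∈ K[x] be an irreducible polynomial. For any two roots α, β of f in K̄, the number of roots of f lying in the subfield K(α) equals the number of roots of f lying in the subfield K(β). (Perlis, Theorem 2.1(i): the root cluster size is independent of the choice of root.) -/
/-!
Two roots `α`, `β` of the irreducible `f` are conjugate: some `σ ∈ Gal(K̄/K)` sends `α` to `β`.
Such a `σ` maps `K(α)` onto `K(β)` and permutes the roots of `f`, so it restricts to a bijection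
between the roots of `f` in `K(α)` and those in `K(β)`.
-/

open Polynomial IntermediateField

section

variable {K L L' : Type*} [Field K] [Field L] [Field L'] [Algebra K L] [Algebra K L']

theorem ncard_roots_mem_map_eq (σ : L ≃ₐ[K] L') (f : K[X]) (F : IntermediateField K L) :
    {x | aeval x f = 0 ∧ x ∈ F.map (σ : L →ₐ[K] L')}.ncard =
      {x | aeval x f = 0 ∧ x ∈ F}.ncard := by
  have hpre : σ ⁻¹' {x | aeval x f = 0 ∧ x ∈ F.map (σ : L →ₐ[K] L')} =
      {x | aeval x f = 0 ∧ x ∈ F} := by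
    ext x
    simp [aeval_algEquiv, mem_map]
  rw [← hpre, Set.ncard_preimage_of_injective_subset_range σ.injective (by simp)]

theorem exists_algEquiv_apply_eq_of_irreducible [Normal K L] {f : K[X]} (hf : Irreducible f)
    {α β : L} (hα : aeval α f = 0) (hβ : aeval β f = 0) : ∃ σ : Gal(L/K), σ α = β := by
  refine minpoly.exists_algEquiv_of_root ⟨f, hf.ne_zero, hβ⟩ ?_
  rw [← minpoly.eq_of_irreducible hf hβ, map_mul, hα, zero_mul]

end

theorem cluster_size_independent_of_root_general {K : Type*} [Field K]
    (f : K[X]) (hf : Irreducible f)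
    (α β : AlgebraicClosure K)
    (hα : aeval α f = 0) (hβ : aeval β f = 0) :
    {x : AlgebraicClosure K | aeval x f = 0 ∧ x ∈ K⟮α⟯}.ncard =
      {x : AlgebraicClosure K | aeval x f = 0 ∧ x ∈ K⟮β⟯}.ncard := by
  obtain ⟨σ, rfl⟩ := exists_algEquiv_apply_eq_of_irreducible hf hα hβ
  have hmap : K⟮α⟯.map (σ : AlgebraicClosure K →ₐ[K] AlgebraicClosure K) = K⟮σ α⟯ := by
    rw [adjoin_map, Set.image_singleton]
    rfl
  rw [← hmap, ncard_roots_mem_map_eq]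

/-- Perlis, Theorem 2.1(i): for an irreducible polynomial `f` over a field `K` of
characteristic zero, the number of roots of `f` (in a fixed algebraic closure) lying in the
field generated by a single root is independent of the choice of that root. -/
theorem cluster_size_independent_of_root {K : Type*} [Field K] [CharZero K]
    (f : K[X]) (hf : Irreducible f)
    (α β : AlgebraicClosure K)
    (hα : aeval α f = 0) (hβ : aeval β f = 0) :
    {x : AlgebraicClosure K | aeval x f = 0 ∧ x ∈ K⟮α⟯}.ncard =
      {x : AlgebraicClosure K | aeval x f = 0 ∧ x ∈ K⟮β⟯}.ncard :=
  cluster_size_independent_of_root_general f hf α β hα hβ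
end

section
/- Let K be a field of characteristic 0 with a fixed algebraic closure K̄, and let f ∈ K[x] be an irreducible polynomial of degree n. Then the root cluster size r_K(f) (the number of roots of f lying in K(α) for a root α of f) divides n. (Perlis, Theorem 2.1(ii).) -/
/-! The roots of `f` in `E = K⟮α⟯` are the images of `α` under the `K`-embeddings `E → E`, and
these are automorphisms since `E/K` is finite. So the cluster size is `#Aut(E/K)`, which equals
`[E : E^Aut(E/K)]` by Artin's theorem and hence divides `[E : K] = deg f`. -/

open Polynomial IntermediateField

theorem AlgEquiv.card_dvd_finrank (K E : Type*) [Field K] [Field E] [Algebra K E]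
    [FiniteDimensional K E] : Nat.card (E ≃ₐ[K] E) ∣ Module.finrank K E := by
  have hfix :
      Module.finrank (fixedField (⊤ : Subgroup (E ≃ₐ[K] E))) E = Nat.card (E ≃ₐ[K] E) := by
    rw [finrank_fixedField_eq_card, Nat.card_congr Subgroup.topEquiv.toEquiv]
  rw [← hfix]
  exact Dvd.intro_left _ (Module.finrank_mul_finrank K _ E)

theorem IntermediateField.card_algEquiv_adjoin_simple_eq_card_aroots {K L : Type*} [Field K]
    [Field L] [Algebra K L] {α : L} (hα : IsIntegral K α) :
    Nat.card (K⟮α⟯ ≃ₐ[K] K⟮α⟯) = Nat.card {x // x ∈ (minpoly K α).aroots K⟮α⟯} :=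
  have := adjoin.finiteDimensional hα
  Nat.card_congr ((algEquivEquivAlgHom K _).toEquiv.trans (algHomAdjoinIntegralEquiv K hα))

theorem IntermediateField.ncard_setOf_aeval_eq_zero_and_mem_eq_card_aroots {K L : Type*}
    [Field K] [Field L] [Algebra K L] {p : K[X]} (hp : p ≠ 0) (E : IntermediateField K L) :
    {x : L | aeval x p = 0 ∧ x ∈ E}.ncard = Nat.card {x // x ∈ p.aroots E} := by
  have hroot (x : E) : aeval (x : L) p = 0 ↔ aeval x p = 0 := by
    rw [aeval_coe, ZeroMemClass.coe_eq_zero]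
  rw [← Nat.card_coe_set_eq]
  exact Nat.card_congr
    { toFun := fun x => ⟨⟨x, x.2.2⟩, mem_aroots.2 ⟨hp, (hroot ⟨x, x.2.2⟩).1 x.2.1⟩⟩
      invFun := fun y => ⟨y, (hroot y).2 (mem_aroots.1 y.2).2, y.1.2⟩
      left_inv := fun _ => rfl
      right_inv := fun _ => rfl }

section Irreducible

variable {K L : Type*} [Field K] [Ring L] [Nontrivial L] [Algebra K L] {f : K[X]} {α : L}

theorem minpoly.natDegree_eq_of_irreducible (hf : Irreducible f)
    (hα : Polynomial.aeval α f = 0) :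
    (minpoly K α).natDegree = f.natDegree := by
  rw [← minpoly.eq_of_irreducible hf hα,
    natDegree_mul_C (inv_ne_zero (leadingCoeff_ne_zero.2 hf.ne_zero))]

theorem minpoly.aroots_eq_of_irreducible (hf : Irreducible f) (hα : Polynomial.aeval α f = 0)
    (S : Type*) [CommRing S] [IsDomain S] [Algebra K S] : (minpoly K α).aroots S = f.aroots S := by
  rw [← minpoly.eq_of_irreducible hf hα, mul_comm,
    aroots_C_mul _ (inv_ne_zero (leadingCoeff_ne_zero.2 hf.ne_zero))]

end Irreducible

theorem cluster_size_dvd_degree_general {K : Type*} [Field K]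
    (f : K[X]) (hf : Irreducible f)
    (α : AlgebraicClosure K) (hα : aeval α f = 0) :
    {x : AlgebraicClosure K | aeval x f = 0 ∧ x ∈ K⟮α⟯}.ncard ∣ f.natDegree := by
  have hint : IsIntegral K α := IsAlgebraic.isIntegral ⟨f, hf.ne_zero, hα⟩
  have := adjoin.finiteDimensional hint
  calc {x : AlgebraicClosure K | aeval x f = 0 ∧ x ∈ K⟮α⟯}.ncard
      = Nat.card (K⟮α⟯ ≃ₐ[K] K⟮α⟯) := by
        rw [ncard_setOf_aeval_eq_zero_and_mem_eq_card_aroots hf.ne_zero,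
          card_algEquiv_adjoin_simple_eq_card_aroots hint, minpoly.aroots_eq_of_irreducible hf hα]
    _ ∣ Module.finrank K K⟮α⟯ := AlgEquiv.card_dvd_finrank K K⟮α⟯
    _ = f.natDegree := by
      rw [adjoin.finrank hint, minpoly.natDegree_eq_of_irreducible hf hα]

/-- Perlis, Theorem 2.1(ii): the root cluster size of an irreducible polynomial `f` over a
field `K` of characteristic zero divides the degree of `f`. -/
theorem cluster_size_dvd_degree {K : Type*} [Field K] [CharZero K]
    (f : K[X]) (hf : Irreducible f)
    (α : AlgebraicClosure K) (hα : aeval α f = 0) :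
    {x : AlgebraicClosure K | aeval x f = 0 ∧ x ∈ K⟮α⟯}.ncard ∣ f.natDegree :=
  cluster_size_dvd_degree_general f hf α hα
end

section
/- Let K be a field of characteristic 0 with a fixed algebraic closure K̄, and let f ∈ K[x] be an irreducible polynomial of degree n. Let r_K(f) be the root cluster size of f and let s_K(f) be the number of distinct fields among the subfields K(α′) of K̄ as α′ ranges over the n roots of f. Then r_K(f) · s_K(f) = n. (Perlis, Theorem 2.1(iii).) -/
open Polynomial IntermediateField

/-!
Two roots `x, y` of the irreducible `f` generate fields of the same degree `n`, so `K⟮x⟯ = K⟮y⟯`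
exactly when `x ∈ K⟮y⟯`: the fibres of `β ↦ K⟮β⟯` on the roots are the root clusters. In a normal
extension any two roots are conjugate under an automorphism, which carries one cluster onto the
other, so all `s` fibres have the same size `r` and `r * s` is the number of roots, which is `n`
since `f` is separable.
-/

theorem Set.ncard_eq_ncard_image_mul_of_ncard_fiber {α β : Type*} {s : Set α} (hs : s.Finite)
    (φ : α → β) {c : ℕ} (hc : ∀ a ∈ s, {x ∈ s | φ x = φ a}.ncard = c) :
    s.ncard = (φ '' s).ncard * c := by
  classical
  obtain ⟨t, rfl⟩ := hs.exists_finset_coe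
  have hfiber : ∀ b ∈ t.image φ, (t.filter (φ · = b)).card = c := by
    intro b hb
    obtain ⟨a, ha, rfl⟩ := Finset.mem_image.mp hb
    rw [← hc a ha, ← Set.ncard_coe_finset, Finset.coe_filter]
    rfl
  rw [← Finset.coe_image, Set.ncard_coe_finset, Set.ncard_coe_finset,
    Finset.card_eq_sum_card_image φ t, Finset.sum_congr rfl hfiber, Finset.sum_const, smul_eq_mul]

section

variable {K L : Type*} [Field K] [Field L] [Algebra K L]

theorem setOf_aeval_eq_zero_eq_rootSet {f : K[X]} (hf : f ≠ 0) :
    {β : L | aeval β f = 0} = f.rootSet L :=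
  Set.ext fun _ ↦ (mem_rootSet_of_ne hf).symm

def rootCluster (f : K[X]) (α : L) : Set L := {x | aeval x f = 0 ∧ x ∈ K⟮α⟯}

theorem finrank_adjoin_simple_of_aeval_eq_zero {f : K[X]} (hf : Irreducible f) {x : L}
    (hx : aeval x f = 0) : Module.finrank K K⟮x⟯ = f.natDegree := by
  rw [adjoin.finrank (IsAlgebraic.isIntegral ⟨f, hf.ne_zero, hx⟩),
    ← minpoly.eq_of_irreducible hf hx,
    natDegree_mul_C (inv_ne_zero (leadingCoeff_ne_zero.mpr hf.ne_zero))]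

theorem adjoin_simple_eq_iff_mem_of_aeval_eq_zero {f : K[X]} (hf : Irreducible f) {x y : L}
    (hx : aeval x f = 0) (hy : aeval y f = 0) : K⟮x⟯ = K⟮y⟯ ↔ x ∈ K⟮y⟯ := by
  refine ⟨fun h ↦ h ▸ mem_adjoin_simple_self K x, fun h ↦ ?_⟩
  have : FiniteDimensional K K⟮y⟯ :=
    adjoin.finiteDimensional (IsAlgebraic.isIntegral ⟨f, hf.ne_zero, hy⟩)
  exact eq_of_le_of_finrank_eq (adjoin_simple_le_iff.mpr h) <| by
    rw [finrank_adjoin_simple_of_aeval_eq_zero hf hx, finrank_adjoin_simple_of_aeval_eq_zero hf hy]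

theorem image_rootCluster (σ : L ≃ₐ[K] L) (f : K[X]) (α : L) :
    σ '' rootCluster f α = rootCluster f (σ α) := by
  have hadjoin : σ '' K⟮α⟯ = K⟮σ α⟯ := by
    have := congrArg ((↑) : IntermediateField K L → Set L) (adjoin_map K {α} (σ : L →ₐ[K] L))
    simpa only [coe_map, Set.image_singleton, AlgEquiv.coe_toAlgHom] using this
  have hroots : σ '' {x | aeval x f = 0} = {x | aeval x f = 0} := by
    ext x
    refine ⟨?_, fun hx ↦ ⟨σ.symm x, ?_, σ.apply_symm_apply x⟩⟩
    · rintro ⟨y, hy, rfl⟩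
      simp only [Set.mem_ofPred_eq, aeval_algHom_apply, hy.out, map_zero]
    · simp only [Set.mem_ofPred_eq, aeval_algHom_apply, hx.out, map_zero]
  change σ '' ({x | aeval x f = 0} ∩ K⟮α⟯) = {x | aeval x f = 0} ∩ K⟮σ α⟯
  rw [Set.image_inter σ.injective, hroots, hadjoin]

theorem ncard_rootCluster_eq [Normal K L] {f : K[X]} (hf : Irreducible f) {α β : L}
    (hα : aeval α f = 0) (hβ : aeval β f = 0) :
    (rootCluster f β).ncard = (rootCluster f α).ncard := by
  obtain ⟨σ, rfl⟩ : ∃ σ : L ≃ₐ[K] L, σ α = β := by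
    refine minpoly.exists_algEquiv_of_root ⟨f, hf.ne_zero, hβ⟩ ?_
    rw [← minpoly.eq_of_irreducible hf hβ, map_mul, hα, zero_mul]
  rw [← image_rootCluster, Set.ncard_image_of_injective _ σ.injective]

theorem ncard_rootCluster_mul_ncard_image_adjoin [Normal K L] {f : K[X]} (hf : Irreducible f)
    {α : L} (hα : aeval α f = 0) :
    (rootCluster f α).ncard * ((fun β : L ↦ K⟮β⟯) '' {β | aeval β f = 0}).ncard =
      {β : L | aeval β f = 0}.ncard := by
  have hfinite : {β : L | aeval β f = 0}.Finite :=
    setOf_aeval_eq_zero_eq_rootSet (L := L) hf.ne_zero ▸ f.rootSet_finite L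
  rw [mul_comm, Set.ncard_eq_ncard_image_mul_of_ncard_fiber hfinite _ fun β hβ ↦ ?_]
  rw [← ncard_rootCluster_eq hf hα hβ]
  congr 1
  ext x
  exact and_congr_right (adjoin_simple_eq_iff_mem_of_aeval_eq_zero hf · hβ)

theorem ncard_setOf_aeval_eq_zero [IsAlgClosed L] {f : K[X]} (hf : f.Separable) :
    {β : L | aeval β f = 0}.ncard = f.natDegree := by
  rw [setOf_aeval_eq_zero_eq_rootSet (L := L) hf.ne_zero, Set.ncard_eq_toFinset_card', Set.toFinset_card,
    card_rootSet_eq_natDegree hf (IsAlgClosed.splits _)]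

end

/-- Perlis, Theorem 2.1(iii): for an irreducible polynomial `f` of degree `n` over a field `K`
of characteristic zero, the root cluster size `r_K(f)` times the number `s_K(f)` of distinct
fields `K(α')`, as `α'` runs over the roots of `f`, equals `n`. -/
theorem cluster_size_mul_num_fields_eq_degree {K : Type*} [Field K] [CharZero K]
    (f : K[X]) (hf : Irreducible f)
    (α : AlgebraicClosure K) (hα : aeval α f = 0) :
    {x : AlgebraicClosure K | aeval x f = 0 ∧ x ∈ K⟮α⟯}.ncard *
      ((fun β : AlgebraicClosure K => K⟮β⟯) '' {β | aeval β f = 0}).ncard =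
      f.natDegree := by
  rw [← ncard_setOf_aeval_eq_zero (L := AlgebraicClosure K) hf.separable]
  exact ncard_rootCluster_mul_ncard_image_adjoin hf hα
end

section
/- Let K be a field of characteristic 0, f ∈ K[x] an irreducible polynomial with splitting field K_f (inside a fixed algebraic closure K̄), G = Gal(K_f/K), α a root of f, and H ≤ G the subgroup of elements fixing K(α) pointwise. Then the root cluster size r_K(f) equals the index [N_G(H) : H] of H in its normalizer N_G(H) in G. (Perlis, Theorem 2.1(iv).) -/
/-!
The Galois group `G` acts transitively on the roots of `f` in `K_f`, and `H` is the stabilizer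
of `α`. Conjugating, `σ` normalizes `H` exactly when `H` fixes `σ α`, i.e. when `σ α ∈ K(α)`.
Hence the roots of `f` lying in `K(α)` form the orbit of `α` under `N_G(H)`, whose stabilizer is
`H`, and orbit–stabilizer gives `[N_G(H) : H]` of them.
-/

open Polynomial IntermediateField

theorem IntermediateField.fixingSubgroup_adjoin_simple {K L : Type*} [Field K] [Field L]
    [Algebra K L] (a : L) :
    K⟮a⟯.fixingSubgroup = MulAction.stabilizer Gal(L/K) a := by
  ext σ
  rw [mem_fixingSubgroup_iff, MulAction.mem_stabilizer_iff, AlgEquiv.smul_def]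
  refine ⟨fun h ↦ h a (mem_adjoin_simple_self K a), fun h ↦ ?_⟩
  have : K⟮a⟯ ≤ fixedField (Subgroup.zpowers σ) := by
    rw [adjoin_simple_le_iff]
    exact fun τ ↦ Subgroup.zpowers_le.mpr (show σ ∈ MulAction.stabilizer Gal(L/K) a from h) τ.2
  exact fun x hx ↦ this hx ⟨σ, Subgroup.mem_zpowers σ⟩

namespace IsGalois

variable {K L : Type*} [Field K] [Field L] [Algebra K L] [FiniteDimensional K L] [IsGalois K L]

theorem mem_normalizer_stabilizer_iff (a : L) (σ : Gal(L/K)) :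
    σ ∈ Subgroup.normalizer (MulAction.stabilizer Gal(L/K) a : Set Gal(L/K)) ↔ σ a ∈ K⟮a⟯ := by
  have conj_mem_iff (τ : Gal(L/K)) :
      σ⁻¹ * τ * σ ∈ MulAction.stabilizer Gal(L/K) a ↔ τ (σ a) = σ a := by
    rw [MulAction.mem_stabilizer_iff, AlgEquiv.smul_def, AlgEquiv.mul_apply, AlgEquiv.mul_apply,
      AlgEquiv.aut_inv, AlgEquiv.symm_apply_eq]
  rw [← fixedField_fixingSubgroup K⟮a⟯, fixingSubgroup_adjoin_simple]
  constructor
  · intro hσ τ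
    exact (conj_mem_iff τ).mp ((Subgroup.mem_normalizer_iff''.mp hσ τ).mp τ.2)
  · intro hσ
    -- in a finite group, `σ⁻¹ H σ ⊆ H` already forces equality
    rw [← Subgroup.inv_mem_iff]
    refine Subgroup.mem_normalizer_fintype fun τ hτ ↦ ?_
    rw [inv_inv]
    exact (conj_mem_iff τ).mpr (hσ ⟨τ, hτ⟩)

theorem orbit_normalizer_stabilizer (a : L) :
    MulAction.orbit (Subgroup.normalizer (MulAction.stabilizer Gal(L/K) a : Set Gal(L/K))) a =
      {b | IsConjRoot K a b ∧ b ∈ K⟮a⟯} := by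
  ext b
  constructor
  · rintro ⟨⟨σ, hσ⟩, rfl⟩
    exact ⟨isConjRoot_of_algEquiv a σ, (mem_normalizer_stabilizer_iff a σ).mp hσ⟩
  · rintro ⟨hb, hbK⟩
    obtain ⟨σ, rfl⟩ := hb.symm.exists_algEquiv
    exact ⟨⟨σ, (mem_normalizer_stabilizer_iff a σ).mpr hbK⟩, rfl⟩

theorem ncard_isConjRoot_mem_adjoin_simple_eq_relIndex (a : L) :
    {b | IsConjRoot K a b ∧ b ∈ K⟮a⟯}.ncard =
      (MulAction.stabilizer Gal(L/K) a).relIndex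
        (Subgroup.normalizer (MulAction.stabilizer Gal(L/K) a : Set Gal(L/K))) := by
  rw [← orbit_normalizer_stabilizer, ← MulAction.index_stabilizer]
  rfl

end IsGalois

theorem Polynomial.aeval_eq_zero_iff_isConjRoot {K L : Type*} [Field K] [Field L] [Algebra K L]
    {f : K[X]} (hf : Irreducible f) {a : L} (ha : aeval a f = 0) (b : L) :
    aeval b f = 0 ↔ IsConjRoot K a b := by
  have ha_int : IsIntegral K a := IsAlgebraic.isIntegral ⟨f, hf.ne_zero, ha⟩
  rw [isConjRoot_iff_aeval_eq_zero ha_int, ← minpoly.eq_of_irreducible hf ha, aeval_mul, aeval_C,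
    mul_eq_zero, or_iff_left]
  simpa using hf.ne_zero

theorem AlgHom.ncard_aeval_eq_zero_mem_adjoin_simple {K L Ω : Type*} [Field K] [Field L]
    [Field Ω] [Algebra K L] [Algebra K Ω] (g : L →ₐ[K] Ω) (f : K[X]) (a : L) :
    {x : Ω | aeval x f = 0 ∧ x ∈ K⟮g a⟯}.ncard = {b : L | aeval b f = 0 ∧ b ∈ K⟮a⟯}.ncard := by
  have root_iff (b : L) : aeval (g b) f = 0 ↔ aeval b f = 0 := by
    rw [aeval_algHom_apply, map_eq_zero_iff g g.injective]
  have image_eq :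
      g '' {b : L | aeval b f = 0 ∧ b ∈ K⟮a⟯} = {x : Ω | aeval x f = 0 ∧ x ∈ K⟮g a⟯} := by
    ext x
    simp only [Set.mem_image, Set.mem_ofPred_eq, ← Set.image_singleton, ← adjoin_map, mem_map]
    constructor
    · rintro ⟨b, ⟨hb, hbK⟩, rfl⟩
      exact ⟨(root_iff b).mpr hb, b, hbK, rfl⟩
    · rintro ⟨hx, b, hbK, rfl⟩
      exact ⟨b, ⟨(root_iff b).mp hx, hbK⟩, rfl⟩
  rw [← image_eq]
  exact Set.ncard_image_of_injective _ g.injective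

/-- Perlis, Theorem 2.1(iv): the root cluster size of an irreducible polynomial `f` over a
field `K` of characteristic zero equals the index `[N_G(H) : H]` where `G = Gal(K_f/K)` is the
Galois group of the splitting field `K_f` of `f` and `H` is the subgroup fixing `K(α)`
pointwise, for a root `α` of `f`. -/
theorem cluster_size_eq_index_normalizer {K : Type*} [Field K] [CharZero K]
    (f : K[X]) (hf : Irreducible f)
    (α : AlgebraicClosure K) (hα : aeval α f = 0)
    (Kf : IntermediateField K (AlgebraicClosure K))
    (hKf : Kf = IntermediateField.adjoin K (f.rootSet (AlgebraicClosure K)))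
    (α' : Kf) (hα' : (α' : AlgebraicClosure K) = α)
    (H : Subgroup (Kf ≃ₐ[K] Kf))
    (hH : H = (IntermediateField.adjoin K {α'}).fixingSubgroup) :
    {x : AlgebraicClosure K | aeval x f = 0 ∧ x ∈ K⟮α⟯}.ncard =
      H.relIndex (Subgroup.normalizer (H : Set (Kf ≃ₐ[K] Kf))) := by
  subst hH hα'
  have : f.IsSplittingField K Kf := hKf ▸ adjoin_rootSet_isSplittingField (IsAlgClosed.splits _)
  have : FiniteDimensional K Kf := IsSplittingField.finiteDimensional Kf f
  have : IsGalois K Kf := IsGalois.of_separable_splitting_field hf.separable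
  have hroot : aeval α' f = 0 := by
    rwa [← map_eq_zero_iff Kf.val Kf.val.injective, ← aeval_algHom_apply]
  rw [fixingSubgroup_adjoin_simple, ← IsGalois.ncard_isConjRoot_mem_adjoin_simple_eq_relIndex]
  refine (Kf.val.ncard_aeval_eq_zero_mem_adjoin_simple f α').trans ?_
  simp_rw [aeval_eq_zero_iff_isConjRoot hf hroot]
end

section
/- Let K be a field of characteristic 0 with a fixed algebraic closure K̄, and let L be a finite extension of K inside K̄. If α and β are two primitive elements of L over K (i.e., K(α) = K(β) = L), then the root cluster size of the minimal polynomial of α over K equals the root cluster size of the minimal polynomial of β over K. (Corollary 2.2: the cluster size depends only on the extension L/K.) -/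
/-!
A `K`-endomorphism of `K⟮α⟯` is determined by the image of `α`, which can be any root of the
minimal polynomial of `α` lying in `K⟮α⟯`. So the cluster size of `α` is the number of
`K`-endomorphisms of `K⟮α⟯`, which only depends on the field `K⟮α⟯ = L`.
-/

open Polynomial IntermediateField

section

variable {K E : Type*} [Field K] [Field E] [Algebra K E]

theorem IntermediateField.ncard_setOf_aeval_eq_zero_and_mem (S : IntermediateField K E)
    (p : K[X]) :
    {x : E | aeval x p = 0 ∧ x ∈ S}.ncard = {y : S | aeval y p = 0}.ncard := by
  have haeval (y : S) : aeval (y : E) p = 0 ↔ aeval y p = 0 := by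
    rw [← S.coe_val, aeval_algHom_apply, map_eq_zero]
  have himage : {x : E | aeval x p = 0 ∧ x ∈ S} = (↑) '' {y : S | aeval y p = 0} := by
    ext x
    constructor
    · rintro ⟨hx, hxS⟩
      exact ⟨⟨x, hxS⟩, (haeval ⟨x, hxS⟩).mp hx, rfl⟩
    · rintro ⟨y, hy, rfl⟩
      exact ⟨(haeval y).mpr hy, y.2⟩
  rw [himage, Set.ncard_image_of_injective _ Subtype.val_injective]

theorem Polynomial.ncard_setOf_aeval_eq_zero {F : Type*} [Field F] [Algebra K F] {p : K[X]}
    (hp : p ≠ 0) : {y : F | aeval y p = 0}.ncard = Nat.card {y // y ∈ p.aroots F} := by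
  rw [← Nat.card_coe_set_eq]
  exact Nat.card_congr (Equiv.subtypeEquivRight fun y => by simp [hp])

theorem ncard_minpoly_roots_mem_adjoin_eq_card_algHom {α : E} (hα : IsIntegral K α) :
    {x : E | aeval x (minpoly K α) = 0 ∧ x ∈ K⟮α⟯}.ncard = Nat.card (K⟮α⟯ →ₐ[K] K⟮α⟯) := by
  rw [ncard_setOf_aeval_eq_zero_and_mem, ncard_setOf_aeval_eq_zero (minpoly.ne_zero hα)]
  exact (Nat.card_congr (algHomAdjoinIntegralEquiv K hα)).symm

end

theorem cluster_size_depends_only_on_extension_general {K : Type*} [Field K]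
    (L : IntermediateField K (AlgebraicClosure K))
    (α β : AlgebraicClosure K)
    (hα : K⟮α⟯ = L) (hβ : K⟮β⟯ = L) :
    {x : AlgebraicClosure K | aeval x (minpoly K α) = 0 ∧ x ∈ K⟮α⟯}.ncard =
      {x : AlgebraicClosure K | aeval x (minpoly K β) = 0 ∧ x ∈ K⟮β⟯}.ncard := by
  rw [ncard_minpoly_roots_mem_adjoin_eq_card_algHom (Algebra.IsIntegral.isIntegral α),
    ncard_minpoly_roots_mem_adjoin_eq_card_algHom (Algebra.IsIntegral.isIntegral β), hα, hβ]

/-- Corollary 2.2: the root cluster size depends only on the extension `L/K`: any two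
primitive elements of a finite extension `L` of `K` (inside a fixed algebraic closure) have
minimal polynomials with equal root cluster sizes. -/
theorem cluster_size_depends_only_on_extension {K : Type*} [Field K] [CharZero K]
    (L : IntermediateField K (AlgebraicClosure K)) [FiniteDimensional K L]
    (α β : AlgebraicClosure K)
    (hα : K⟮α⟯ = L) (hβ : K⟮β⟯ = L) :
    {x : AlgebraicClosure K | aeval x (minpoly K α) = 0 ∧ x ∈ K⟮α⟯}.ncard =
      {x : AlgebraicClosure K | aeval x (minpoly K β) = 0 ∧ x ∈ K⟮β⟯}.ncard :=
  cluster_size_depends_only_on_extension_general L α β hα hβ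
end

section
/- For every integer n ≥ 4, any subgroup H of the alternating group A_n of index n is a maximal subgroup of A_n and is isomorphic to the alternating group A_{n-1}. (Proposition 2.3.) -/
/-!
For `n ≥ 5` the group `A_n` is simple, so it acts faithfully on the `n` cosets of `H`. This embeds
`A_n` into `S_n` as a subgroup of index two, i.e. onto the alternating group of the cosets, and
carries `H` onto the stabilizer of the trivial coset, which is `A_{n-1}`. Comparing `|A_n|` with
`k!` shows that a proper subgroup of `A_n` has index at least `n`, so nothing lies strictly between
`H` and `A_n`. For `n = 4`, `H` has prime order `3`, and it is maximal because `A_4` has no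
subgroup of index two: every 3-cycle is the square of its square.
-/

open Equiv Equiv.Perm MulAction
open scoped Nat

theorem MulAction.toPermHom_quotient_injective {G : Type*} [Group G] [IsSimpleGroup G]
    {H : Subgroup G} (hH : H ≠ ⊤) : Function.Injective (toPermHom G (G ⧸ H)) := by
  rw [← MonoidHom.ker_eq_bot_iff, ← H.normalCore_eq_ker]
  refine H.normalCore_normal.eq_bot_or_eq_top.resolve_right fun h ↦ hH ?_
  exact top_le_iff.mp (h ▸ H.normalCore_le)

variable {α : Type*} [Fintype α] [DecidableEq α]

theorem Equiv.Perm.range_eq_alternatingGroup_of_injective {G : Type*} [Group G]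
    {f : G →* Perm α} (hf : Function.Injective f)
    (hcard : 2 * Nat.card G = Nat.card (Perm α)) : f.range = alternatingGroup α := by
  apply eq_alternatingGroup_of_index_eq_two
  have hG : 0 < Nat.card G := by
    have : 0 < Nat.card (Perm α) := Nat.card_pos
    omega
  have := f.range.index_mul_card
  rw [← Nat.card_congr (MonoidHom.ofInjective hf).toEquiv, ← hcard] at this
  exact Nat.eq_of_mul_eq_mul_right hG this

namespace alternatingGroup

theorem index_ne_two (K : Subgroup (alternatingGroup α)) : K.index ≠ 2 := by
  intro hK
  suffices K = ⊤ by simp [this] at hK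
  rw [eq_top_iff, ← closure_isThreeCycles_eq_top, Subgroup.closure_le]
  intro g hg
  have hg3 : g ^ 3 = 1 := by
    rw [← orderOf_dvd_iff_pow_eq_one, ← orderOf_injective _ (Subgroup.subtype_injective _) g]
    exact hg.orderOf.dvd
  have : g = (g ^ 2) ^ 2 := by
    rw [← pow_mul, show 2 * 2 = 3 + 1 from rfl, pow_succ, hg3, one_mul]
  rw [SetLike.mem_coe, this]
  exact Subgroup.sq_mem_of_index_two hK _

theorem card_le_index_of_ne_top (h5 : 5 ≤ Nat.card α) {K : Subgroup (alternatingGroup α)}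
    (hK : K ≠ ⊤) : Nat.card α ≤ K.index := by
  have := isSimpleGroup h5
  have : Nontrivial α := Finite.one_lt_card_iff_nontrivial.mp (by omega)
  have hle : Nat.card (alternatingGroup α) ≤ K.index ! := by
    rw [Subgroup.index, ← Nat.card_perm]
    exact Nat.card_le_card_of_injective _ (toPermHom_quotient_injective hK)
  by_contra! hlt
  obtain ⟨m, hm⟩ : ∃ m, Nat.card α = m + 1 := ⟨Nat.card α - 1, by omega⟩
  have h2 := two_mul_nat_card_alternatingGroup (α := α)
  rw [Nat.card_perm, hm, Nat.factorial_succ] at h2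
  have : K.index ! ≤ m ! := Nat.factorial_le (by omega)
  have : (m + 1) * m ! ≤ 2 * m ! := by omega
  have := Nat.le_of_mul_le_mul_right this (Nat.factorial_pos m)
  omega

theorem isCoatom_of_index_eq_card (h4 : 4 ≤ Nat.card α) {H : Subgroup (alternatingGroup α)}
    (hH : H.index = Nat.card α) : IsCoatom H := by
  refine ⟨fun h ↦ by rw [h, Subgroup.index_top] at hH; omega, fun K hHK ↦ ?_⟩
  by_contra hK
  have hK1 : K.index ≠ 1 := mt Subgroup.index_eq_one.mp hK
  have hlt : K.index < Nat.card α := hH ▸ Subgroup.index_strictAnti hHK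
  obtain h4 | h5 := h4.eq_or_lt
  · rw [← h4] at hH hlt
    have hdvd : K.index ∣ 4 := hH ▸ Subgroup.index_dvd_of_le hHK.le
    have := index_ne_two K
    interval_cases K.index <;> omega
  · have := card_le_index_of_ne_top h5 hK
    omega

theorem range_ofSubtype_compl_singleton (a : α) :
    (ofSubtype ({a}ᶜ : Finset α)).range = stabilizer (alternatingGroup α) a := by
  ext k
  rw [mem_range_ofSubtype_iff, mem_stabilizer_iff, Subgroup.smul_def, Perm.smul_def]
  simp [Finset.subset_iff, not_imp_comm]

noncomputable def stabilizerMulEquiv (a : α) :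
    stabilizer (alternatingGroup α) a ≃* alternatingGroup ({a}ᶜ : Finset α) :=
  (MulEquiv.subgroupCongr (range_ofSubtype_compl_singleton a).symm).trans
    (MonoidHom.ofInjective ofSubtype_injective).symm

theorem nonempty_mulEquiv_of_index_eq_card_of_five_le (h5 : 5 ≤ Nat.card α)
    {H : Subgroup (alternatingGroup α)} (hH : H.index = Nat.card α) :
    Nonempty (H ≃* alternatingGroup (Fin (Nat.card α - 1))) := by
  classical
  have := isSimpleGroup h5
  have : Nontrivial α := Finite.one_lt_card_iff_nontrivial.mp (by omega)
  let X := alternatingGroup α ⧸ H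
  let _ : Fintype X := Fintype.ofFinite X
  have hX : Nat.card X = Nat.card α := hH
  have hinj := toPermHom_quotient_injective (H := H) fun h ↦ by
    rw [h, Subgroup.index_top] at hH; omega
  have hrange : (toPermHom (alternatingGroup α) X).range = alternatingGroup X := by
    refine range_eq_alternatingGroup_of_injective hinj ?_
    rw [two_mul_nat_card_alternatingGroup, Nat.card_perm, Nat.card_perm, hX]
  let e : alternatingGroup α ≃* alternatingGroup X :=
    (MonoidHom.ofInjective hinj).trans (MulEquiv.subgroupCongr hrange)
  let x₀ : X := (1 : alternatingGroup α)
  have hmap : H.map e.toMonoidHom = stabilizer (alternatingGroup X) x₀ := by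
    ext σ
    obtain ⟨g, rfl⟩ := e.surjective σ
    rw [Subgroup.mem_map_equiv, e.symm_apply_apply, mem_stabilizer_iff]
    conv_lhs => rw [← stabilizer_quotient H]
    -- `e g` acts on the cosets exactly as `g` does
    rfl
  have hcard : Fintype.card ({x₀}ᶜ : Finset X) = Nat.card α - 1 := by
    rw [Fintype.card_coe, Finset.card_compl, Finset.card_singleton, ← Nat.card_eq_fintype_card, hX]
  exact ⟨(e.subgroupMap H).trans <| (MulEquiv.subgroupCongr hmap).trans <|
    (stabilizerMulEquiv x₀).trans (Equiv.altCongrHom (Fintype.equivFinOfCardEq hcard))⟩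

theorem nonempty_mulEquiv_of_index_eq_card_of_card_eq_four (h4 : Nat.card α = 4)
    {H : Subgroup (alternatingGroup α)} (hH : H.index = Nat.card α) :
    Nonempty (H ≃* alternatingGroup (Fin (Nat.card α - 1))) := by
  have : Nontrivial α := Finite.one_lt_card_iff_nontrivial.mp (by omega)
  have : Fact (Nat.Prime 3) := ⟨Nat.prime_three⟩
  have hA : Nat.card (alternatingGroup α) = 12 := by
    rw [nat_card_alternatingGroup, h4]; rfl
  have hH3 : Nat.card H = 3 := by
    have := H.index_mul_card
    rw [hH, h4, hA] at this
    omega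
  refine ⟨mulEquivOfPrimeCardEq hH3 ?_⟩
  rw [h4, nat_card_alternatingGroup, Nat.card_fin]; rfl

theorem nonempty_mulEquiv_of_index_eq_card (h4 : 4 ≤ Nat.card α)
    {H : Subgroup (alternatingGroup α)} (hH : H.index = Nat.card α) :
    Nonempty (H ≃* alternatingGroup (Fin (Nat.card α - 1))) := by
  obtain h4 | h5 := h4.eq_or_lt
  · exact nonempty_mulEquiv_of_index_eq_card_of_card_eq_four h4.symm hH
  · exact nonempty_mulEquiv_of_index_eq_card_of_five_le h5 hH

end alternatingGroup

/-- Proposition 2.3: for `n ≥ 4`, any subgroup `H` of index `n` in the alternating group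
`A_n` is a maximal subgroup and is isomorphic to `A_{n-1}`. -/
theorem index_n_subgroup_of_alternating_isMaximal_and_iso (n : ℕ) (hn : 4 ≤ n)
    (H : Subgroup (alternatingGroup (Fin n))) (hH : H.index = n) :
    IsCoatom H ∧ Nonempty (H ≃* alternatingGroup (Fin (n - 1))) := by
  have hn' : 4 ≤ Nat.card (Fin n) := by rwa [Nat.card_fin]
  have hH' : H.index = Nat.card (Fin n) := by rw [hH, Nat.card_fin]
  refine ⟨alternatingGroup.isCoatom_of_index_eq_card hn' hH', ?_⟩
  have := alternatingGroup.nonempty_mulEquiv_of_index_eq_card hn' hH'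
  rwa [Nat.card_fin] at this
end

section
/- (Reformulated cluster magnification) Let K be a field of characteristic 0 with fixed algebraic closure K̄, and let L ⊆ K̄ be a finite extension of K of degree n with cluster size r, where the cluster size of L/K is defined as the index [N_G(H) : H] with G the Galois group of the Galois closure L̃ of L over K and H the subgroup of G fixing L pointwise. If F ⊆ K̄ is a Galois extension of K of degree d that is linearly disjoint from L̃ over K, then the compositum LF has degree n·d over K and its cluster size over K is r·d. -/
/-!
Restriction from `Gal(K̄/K)` onto `Gal(L̃/K)` and `Gal(M̃/K)` is surjective, so both cluster sizes
can be computed in `Gal(K̄/K)`, as `[N(S) : S]` for `S = Gal(K̄/L)` and `[N(S ⊓ N₂) : S ⊓ N₂]` for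
`N₂ = Gal(K̄/F)`. Linear disjointness gives `L̃ ∩ F = K`; as `N₁ = Gal(K̄/L̃)` is open, `N₁ ⊔ N₂` is a
closed subgroup with fixed field `L̃ ∩ F = K`, hence all of `Gal(K̄/K)`. For normal `N₁ ≤ S` and `N₂`
with `N₁ N₂ = G`, one has `S = (S ⊓ N₂) N₁`, so `S` and `S ⊓ N₂` have the same normalizer, and
`[S : S ⊓ N₂] = [G : N₂] = [F : K]`. Indices are natural numbers, so an infinite `F` gives `0` on
both sides.
-/

open IntermediateField

namespace Subgroup

variable {G G' : Type*} [Group G] [Group G']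

theorem relIndex_normalizer_comap_of_surjective {f : G →* G'} (hf : Function.Surjective f)
    (H : Subgroup G') :
    (H.comap f).relIndex (normalizer (H.comap f : Set G)) =
      H.relIndex (normalizer (H : Set G')) := by
  rw [← comap_normalizer_eq_of_surjective H hf, relIndex_comap, map_comap_eq_self_of_surjective hf]

variable {S N₁ N₂ : Subgroup G} [N₁.Normal]

theorem inf_sup_normal_eq_of_le (h₁ : N₁ ≤ S) (h : N₁ ⊔ N₂ = ⊤) : S ⊓ N₂ ⊔ N₁ = S := by
  refine le_antisymm (sup_le inf_le_left h₁) fun s hs => ?_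
  obtain ⟨a, ha, b, hb, rfl⟩ := mem_sup_of_normal_left.mp (h ▸ mem_top s : s ∈ N₁ ⊔ N₂)
  have hbS : b ∈ S := by simpa using mul_mem (inv_mem (h₁ ha)) hs
  exact mul_mem (mem_sup_right ha) (mem_sup_left ⟨hbS, hb⟩)

variable [N₂.Normal]

theorem normalizer_inf_normal_eq (h₁ : N₁ ≤ S) (h : N₁ ⊔ N₂ = ⊤) :
    normalizer ((S ⊓ N₂ : Subgroup G) : Set G) = normalizer (S : Set G) := by
  refine le_antisymm ?_ ?_
  · calc normalizer ((S ⊓ N₂ : Subgroup G) : Set G)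
        ≤ normalizer ((S ⊓ N₂ ⊔ N₁ : Subgroup G) : Set G) := normalizer_le_normalizer_sup_normal
      _ = normalizer (S : Set G) := by rw [inf_sup_normal_eq_of_le h₁ h]
  · calc normalizer (S : Set G) = normalizer S ⊓ normalizer N₂ := by
          rw [normalizer_eq_top (H := N₂), inf_top_eq]
      _ ≤ normalizer ((S ⊓ N₂ : Subgroup G) : Set G) := inf_normalizer_le_normalizer_inf

theorem relIndex_normalizer_inf_normal (h₁ : N₁ ≤ S) (h : N₁ ⊔ N₂ = ⊤) :
    (S ⊓ N₂).relIndex (normalizer ((S ⊓ N₂ : Subgroup G) : Set G)) =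
      S.relIndex (normalizer (S : Set G)) * N₂.index := by
  have hS₂ : S ⊔ N₂ = ⊤ := top_le_iff.mp (h ▸ sup_le_sup_right h₁ N₂)
  rw [normalizer_inf_normal_eq h₁ h, ← relIndex_mul_relIndex _ S _ inf_le_left le_normalizer,
    inf_relIndex_left, ← relIndex_sup_right S N₂, hS₂, relIndex_top_right, mul_comm]

end Subgroup

namespace IntermediateField

variable {K Ω : Type*} [Field K] [Field Ω] [Algebra K Ω]

theorem fixingSubgroup_sup_fixingSubgroup_eq_top [IsGalois K Ω]
    {A B : IntermediateField K Ω} [FiniteDimensional K A] (h : A ⊓ B = ⊥) :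
    A.fixingSubgroup ⊔ B.fixingSubgroup = ⊤ := by
  set S := A.fixingSubgroup ⊔ B.fixingSubgroup
  have hS : IsClosed (S : Set Gal(Ω/K)) :=
    OpenSubgroup.isClosed ⟨S, Subgroup.isOpen_mono le_sup_left A.fixingSubgroup_isOpen⟩
  have hfixed : fixedField S = ⊥ := by
    rw [eq_bot_iff, ← h]
    refine le_inf ?_ ?_
    · simpa only [InfiniteGalois.fixedField_fixingSubgroup] using
        fixedField_antitone (le_sup_left : A.fixingSubgroup ≤ S)
    · simpa only [InfiniteGalois.fixedField_fixingSubgroup] using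
        fixedField_antitone (le_sup_right : B.fixingSubgroup ≤ S)
  simpa [hfixed] using (InfiniteGalois.fixingSubgroup_fixedField ⟨S, hS⟩).symm

theorem comap_restrictNormalHom_eq_fixingSubgroup
    {E A : IntermediateField K Ω} [Normal K E] (hAE : A ≤ E) {H : Subgroup Gal(E/K)}
    (hH : ∀ g : Gal(E/K), g ∈ H ↔ ∀ x : E, (x : Ω) ∈ A → g x = x) :
    H.comap (AlgEquiv.restrictNormalHom E) = A.fixingSubgroup := by
  ext σ
  simp only [Subgroup.mem_comap, hH, mem_fixingSubgroup_iff, Subtype.ext_iff,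
    AlgEquiv.restrictNormalHom_apply]
  exact ⟨fun h x hx => h ⟨x, hAE hx⟩ hx, fun h x hx => h x hx⟩

theorem relIndex_normalizer_eq_fixingSubgroup [Normal K Ω]
    {E A : IntermediateField K Ω} [Normal K E] (hAE : A ≤ E) {H : Subgroup Gal(E/K)}
    (hH : ∀ g : Gal(E/K), g ∈ H ↔ ∀ x : E, (x : Ω) ∈ A → g x = x) :
    H.relIndex (Subgroup.normalizer (H : Set Gal(E/K))) =
      A.fixingSubgroup.relIndex (Subgroup.normalizer (A.fixingSubgroup : Set Gal(Ω/K))) := by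
  rw [← comap_restrictNormalHom_eq_fixingSubgroup hAE hH,
    Subgroup.relIndex_normalizer_comap_of_surjective (AlgEquiv.restrictNormalHom_surjective Ω)]

end IntermediateField

/-- Reformulated cluster magnification: let `L/K` (inside a fixed algebraic closure of the
characteristic-zero field `K`) be finite of degree `n` with cluster size `r`, where the
cluster size is the index `[N_G(H) : H]` with `G` the Galois group of the Galois closure `L̃`
of `L` over `K` and `H` the subgroup fixing `L` pointwise. If `F/K` is Galois of degree `d`
and linearly disjoint from `L̃` over `K`, then the compositum `LF` has degree `n·d` over `K`
and cluster size `r·d` over `K`. -/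
theorem cluster_magnification_reformulated {K : Type*} [Field K] [CharZero K]
    (L : IntermediateField K (AlgebraicClosure K)) [FiniteDimensional K L]
    (n : ℕ) (hn : Module.finrank K L = n)
    (Ltil : IntermediateField K (AlgebraicClosure K))
    (hLtil : Ltil = normalClosure K L (AlgebraicClosure K))
    (H : Subgroup (Ltil ≃ₐ[K] Ltil))
    (hH : ∀ g : Ltil ≃ₐ[K] Ltil, g ∈ H ↔ ∀ x : Ltil, (x : AlgebraicClosure K) ∈ L → g x = x)
    (r : ℕ) (hr : H.relIndex (Subgroup.normalizer (H : Set (Ltil ≃ₐ[K] Ltil))) = r)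
    (F : IntermediateField K (AlgebraicClosure K)) [IsGalois K F]
    (d : ℕ) (hd : Module.finrank K F = d)
    (hdisj : F.LinearDisjoint Ltil)
    (Mtil : IntermediateField K (AlgebraicClosure K))
    (hMtil : Mtil = normalClosure K ↥(L ⊔ F) (AlgebraicClosure K))
    (H' : Subgroup (Mtil ≃ₐ[K] Mtil))
    (hH' : ∀ g : Mtil ≃ₐ[K] Mtil, g ∈ H' ↔ ∀ x : Mtil, (x : AlgebraicClosure K) ∈ L ⊔ F → g x = x) :
    Module.finrank K ↥(L ⊔ F) = n * d ∧ H'.relIndex (Subgroup.normalizer (H' : Set (Mtil ≃ₐ[K] Mtil))) = r * d := by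
  subst hLtil hMtil hn hd hr
  have hLLtil := le_normalClosure L
  refine ⟨(hdisj.symm.of_le_left hLLtil).finrank_sup, ?_⟩
  rw [relIndex_normalizer_eq_fixingSubgroup (le_normalClosure _) hH',
    relIndex_normalizer_eq_fixingSubgroup hLLtil hH, fixingSubgroup_sup,
    finrank_eq_fixingSubgroup_index]
  exact Subgroup.relIndex_normalizer_inf_normal (fixingSubgroup_antitone hLLtil)
    (fixingSubgroup_sup_fixingSubgroup_eq_top hdisj.symm.inf_eq_bot)
end

section
/- Let K be a field of characteristic 0 and f ∈ K[x] an irreducible quartic polynomial whose Galois group (of its splitting field over K) is isomorphic to the dihedral group D_4 of order 8. Then the root cluster size of f is 2, i.e., for any root α of f, exactly 2 of the 4 roots of f lie in K(α). -/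
/-!
Let `E` be the splitting field of `f`, so `[E : K] = 8`, and let `H ≤ Gal(E/K)` fix `K(α)`.
As `[K(α) : K] = 4`, the group `H` has order `2`, and by the Galois correspondence the roots
of `f` lying in `K(α)` are exactly the roots fixed by `H`. For a `2`-group acting on the four
roots, the number of fixed points is `≡ 4 (mod 2)`; it is positive (`α` is fixed) and not `4`,
because `Gal(E/K)` acts faithfully on the roots, which generate `E`. Hence it is `2`.
-/

open Polynomial IntermediateField Module MulAction

theorem card_fixedPoints_eq_of_card_eq_two_mul {G X : Type*} [Group G] [MulAction G X]
    [FaithfulSMul G X] {p : ℕ} [hp : Fact p.Prime] (hG : Nat.card G = p)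
    (hX : Nat.card X = 2 * p) (hfix : (fixedPoints G X).Nonempty) :
    Nat.card (fixedPoints G X) = p := by
  have : Finite X := Nat.finite_of_card_ne_zero (by simp [hX, hp.out.ne_zero])
  have hmod : 2 * p ≡ Nat.card (fixedPoints G X) [MOD p] :=
    hX ▸ (IsPGroup.of_card (n := 1) (by rw [hG, pow_one])).card_modEq_card_fixedPoints X
  have hne : fixedPoints G X ≠ Set.univ := by
    have : Finite G := Nat.finite_of_card_ne_zero (hG ▸ hp.out.ne_zero)
    have : Nontrivial G := Finite.one_lt_card_iff_nontrivial.1 (hG ▸ hp.out.one_lt)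
    obtain ⟨g, hg⟩ : ∃ g : G, g ≠ 1 := exists_ne 1
    intro h
    exact hg <| eq_of_smul_eq_smul fun x => by
      rw [one_smul]
      exact (h ▸ Set.mem_univ x : x ∈ fixedPoints G X) g
  have hlt : Nat.card (fixedPoints G X) < 2 * p := by
    rw [← hX, Nat.card_coe_set_eq, ← Set.ncard_univ]
    exact Set.ncard_lt_ncard (Set.ssubset_univ_iff.2 hne)
  exact Nat.eq_of_dvd_of_lt_two_mul (Nat.card_pos_iff.2 ⟨hfix.to_subtype, inferInstance⟩).ne'
    ((hmod.dvd_iff dvd_rfl).1 (dvd_mul_left p 2)) hlt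

theorem faithfulSMul_rootSet_of_isSplittingField {K E : Type*} [Field K] [Field E] [Algebra K E]
    (f : K[X]) [IsSplittingField K E f] : FaithfulSMul (E ≃ₐ[K] E) (f.rootSet E) :=
  ⟨fun h => AlgEquiv.coe_toAlgHom_injective <| AlgHom.ext_of_adjoin_eq_top
    (IsSplittingField.adjoin_rootSet E f) fun x hx => congrArg Subtype.val (h ⟨x, hx⟩)⟩

theorem finrank_adjoin_simple_of_irreducible {K L : Type*} [Field K] [Field L] [Algebra K L]
    {f : K[X]} (hf : Irreducible f) {α : L} (hα : aeval α f = 0) :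
    finrank K K⟮α⟯ = f.natDegree := by
  rw [adjoin.finrank (IsAlgebraic.isIntegral ⟨f, hf.ne_zero, hα⟩),
    ← minpoly.eq_of_irreducible hf hα, natDegree_mul_C]
  exact inv_ne_zero (leadingCoeff_ne_zero.2 hf.ne_zero)

theorem ncard_roots_mem_lift {K L : Type*} [Field K] [Field L] [Algebra K L]
    {E : IntermediateField K L} (F : IntermediateField K E) (f : K[X]) :
    {x : L | aeval x f = 0 ∧ x ∈ lift F}.ncard = {x : E | aeval x f = 0 ∧ x ∈ F}.ncard := by
  have hroot (y : E) : aeval (y : L) f = 0 ↔ aeval y f = 0 := by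
    rw [aeval_coe, ZeroMemClass.coe_eq_zero]
  have : {x : L | aeval x f = 0 ∧ x ∈ lift F} = (↑) '' {x : E | aeval x f = 0 ∧ x ∈ F} := by
    ext x
    constructor
    · rintro ⟨hx, y, hy, rfl⟩
      exact ⟨y, ⟨(hroot y).1 hx, hy⟩, rfl⟩
    · rintro ⟨y, ⟨hy, hyF⟩, rfl⟩
      exact ⟨(hroot y).2 hy, (mem_lift y).2 hyF⟩
  rw [this, Set.ncard_image_of_injective _ Subtype.val_injective]

theorem ncard_roots_mem_eq_card_fixedPoints {K E : Type*} [Field K] [Field E] [Algebra K E]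
    [FiniteDimensional K E] [IsGalois K E] (F : IntermediateField K E) {f : K[X]} (hf : f ≠ 0) :
    {x : E | aeval x f = 0 ∧ x ∈ F}.ncard =
      Nat.card (fixedPoints (fixingSubgroup F) (f.rootSet E)) := by
  have : {x : E | aeval x f = 0 ∧ x ∈ F} =
      (↑) '' fixedPoints (fixingSubgroup F) (f.rootSet E) := by
    ext x
    constructor
    · rintro ⟨hx, hxF⟩
      rw [← IsGalois.fixedField_fixingSubgroup F] at hxF
      exact ⟨⟨x, (mem_rootSet_of_ne hf).2 hx⟩, fun σ => Subtype.ext (hxF σ), rfl⟩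
    · rintro ⟨y, hy, rfl⟩
      refine ⟨aeval_eq_zero_of_mem_rootSet y.2, ?_⟩
      rw [← IsGalois.fixedField_fixingSubgroup F]
      exact fun σ => congrArg Subtype.val (hy σ)
  rw [this, Set.ncard_image_of_injective _ Subtype.val_injective, Nat.card_coe_set_eq]

theorem ncard_roots_mem_adjoin_simple_eq_two {K E : Type*} [Field K] [Field E] [Algebra K E]
    {f : K[X]} [IsSplittingField K E f] (hf : Irreducible f) (hsep : f.Separable)
    (hdeg : f.natDegree = 4) (hE : finrank K E = 8) {α : E} (hα : aeval α f = 0) :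
    {x : E | aeval x f = 0 ∧ x ∈ K⟮α⟯}.ncard = 2 := by
  have : FiniteDimensional K E := IsSplittingField.finiteDimensional E f
  have : IsGalois K E := IsGalois.of_separable_splitting_field hsep
  have : FaithfulSMul (E ≃ₐ[K] E) (f.rootSet E) := faithfulSMul_rootSet_of_isSplittingField f
  have : Fact (Nat.Prime 2) := ⟨Nat.prime_two⟩
  have hH : Nat.card (fixingSubgroup K⟮α⟯) = 2 := by
    have := finrank_mul_finrank K K⟮α⟯ E
    rw [finrank_adjoin_simple_of_irreducible hf hα, hdeg, hE] at this
    rw [IsGalois.card_fixingSubgroup_eq_finrank]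
    omega
  rw [ncard_roots_mem_eq_card_fixedPoints _ hf.ne_zero]
  refine card_fixedPoints_eq_of_card_eq_two_mul hH ?_ ?_
  · rw [Nat.card_eq_fintype_card, card_rootSet_eq_natDegree hsep (IsSplittingField.splits E f),
      hdeg]
  · exact ⟨⟨α, (mem_rootSet_of_ne hf.ne_zero).2 hα⟩,
      fun σ => Subtype.ext (σ.2 ⟨α, mem_adjoin_simple_self K α⟩)⟩

/-- An irreducible quartic polynomial over a field of characteristic zero whose Galois group
is the dihedral group of order 8 has root cluster size `2`: for any root `α`, exactly two of
the four roots lie in `K(α)`. -/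
theorem cluster_size_two_of_quartic_dihedral {K : Type*} [Field K] [CharZero K]
    (f : K[X]) (hf : Irreducible f) (hdeg : f.natDegree = 4)
    (Kf : IntermediateField K (AlgebraicClosure K))
    (hKf : Kf = IntermediateField.adjoin K (f.rootSet (AlgebraicClosure K)))
    (hgal : Nonempty ((Kf ≃ₐ[K] Kf) ≃* DihedralGroup 4)) :
    ∀ α : AlgebraicClosure K, aeval α f = 0 →
      {x : AlgebraicClosure K | aeval x f = 0 ∧ x ∈ K⟮α⟯}.ncard = 2 := by
  subst hKf
  intro α hα
  obtain ⟨e⟩ := hgal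
  set E := adjoin K (f.rootSet (AlgebraicClosure K))
  have : IsSplittingField K E f := adjoin_rootSet_isSplittingField (IsAlgClosed.splits _)
  have : FiniteDimensional K E := IsSplittingField.finiteDimensional E f
  have : IsGalois K E := IsGalois.of_separable_splitting_field hf.separable
  have hE : finrank K E = 8 := by
    rw [← IsGalois.card_aut_eq_finrank, Nat.card_congr e.toEquiv, Nat.card_eq_fintype_card,
      DihedralGroup.card]
  let α' : E := ⟨α, subset_adjoin K _ ((mem_rootSet_of_ne hf.ne_zero).2 hα)⟩
  have hα' : aeval α' f = 0 := by rwa [← ZeroMemClass.coe_eq_zero, ← aeval_coe]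
  rw [← lift_adjoin_simple K E α', ncard_roots_mem_lift]
  exact ncard_roots_mem_adjoin_simple_eq_two hf hf.separable hdeg hE hα'
end
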